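/- arXiv:2406.12550 — 4 statements merged into one kernel-verified Lean document; each statement's English description precedes it below -/
import Mathlib

section
/- Let a finite discounted MDP be given with state space S, action space A, transition kernel T, reward function r : S × A → [0,1], initial distribution d₀, and discount factor γ ∈ (0,1). Let π^E be a deterministic expert policy and let d^{π^E}(s̃) = (1−γ) Σ_{t=0}^∞ γ^t Pr(s_t = s̃ | π^E) be its normalized discounted visitation distribution over S. Let N ≥ 1 and let the dataset D = (s̃₁, …, s̃_N) consist of N independent draws from d^{π^E}. Suppose for every dataset D a deterministic policy π_D is given satisfying π_D(s̃) = π^E(s̃) for all states s̃ appearing in D. Then for every state s with d₀(s) > 0, the expected value gap satisfies E_D[ V^{π^E}(s) − V^{π_D}(s) ] ≤ (1/(d₀(s)(1−γ)²)) · (4|S|/(9N)). -/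
open scoped BigOperators

/-- The row-stochastic matrix induced by a deterministic policy `π` on a transition
kernel `T`: `(P_π)_{s,s'} = T(s'|s,π(s))`. -/
noncomputable def polMatrix {S A : Type*} [Fintype S]
    (T : S → A → S → ℝ) (π : S → A) : Matrix S S ℝ :=
  fun s s' => T s (π s) s'

/-- The value function of a deterministic policy `π`:
`V^π(s) = Σ_{t=0}^∞ γ^t Σ_{s'} (P_π^t)_{s,s'} r(s',π(s'))`. -/
noncomputable def valueFn {S A : Type*} [Fintype S] [DecidableEq S]
    (T : S → A → S → ℝ) (r : S → A → ℝ) (γ : ℝ) (π : S → A) (s : S) : ℝ :=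
  ∑' t : ℕ, γ ^ t * ∑ s', (polMatrix T π ^ t) s s' * r s' (π s')

/-- The normalized discounted visitation distribution of policy `π` started from the
initial distribution `d₀`: `d^π(st) = (1−γ) Σ_{t=0}^∞ γ^t Σ_{s₀} d₀(s₀) (P_π^t)_{s₀,st}`. -/
noncomputable def dvisit {S A : Type*} [Fintype S] [DecidableEq S]
    (T : S → A → S → ℝ) (d0 : S → ℝ) (γ : ℝ) (π : S → A) (st : S) : ℝ :=
  (1 - γ) * ∑' t : ℕ, γ ^ t * ∑ s₀, d0 s₀ * (polMatrix T π ^ t) s₀ st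

/-!
The value gap of `π` against `πE` is the discounted sum, along the chain of `πE`, of the
Bellman residual `r(s', πE s') + γ (P_{πE} V^π)(s') - V^π(s')`, which vanishes where `π` agrees
with `πE` and is at most `1/(1-γ)` elsewhere. Started from `s`, the discounted number of visits
to a state is at most `d^{πE}/((1-γ) d₀(s))`, so the gap is at most `1/(d₀(s)(1-γ)²)` times the
`d^{πE}`-mass of the states missed by the sample. The expected missing mass of `N` samples is
`∑ₓ d(x)(1-d(x))^N`, and `x(1-x)^N ≤ x e^{-Nx} ≤ 1/(eN) ≤ 4/(9N)`.
-/

open Finset Matrix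

section RowStochastic

variable {n : Type*} [Fintype n] [DecidableEq n] {P : Matrix n n ℝ}

lemma mulVec_mono_of_mem_rowStochastic (hP : P ∈ rowStochastic ℝ n) {x y : n → ℝ}
    (hxy : x ≤ y) : P *ᵥ x ≤ P *ᵥ y := by
  intro i
  have := nonneg_mulVec_of_mem_rowStochastic hP (x := y - x) (fun j => sub_nonneg.2 (hxy j)) i
  rwa [mulVec_sub, Pi.sub_apply, sub_nonneg] at this

lemma mulVec_const_of_mem_rowStochastic (hP : P ∈ rowStochastic ℝ n) (a : ℝ) :
    P *ᵥ (fun _ => a) = fun _ => a := by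
  ext i
  simp [mulVec, dotProduct, ← sum_mul, sum_row_of_mem_rowStochastic hP]

lemma abs_mulVec_le_of_mem_rowStochastic (hP : P ∈ rowStochastic ℝ n) {x : n → ℝ} {M : ℝ}
    (hx : ∀ j, |x j| ≤ M) (i : n) : |(P *ᵥ x) i| ≤ M := by
  have hlo := mulVec_mono_of_mem_rowStochastic hP (x := fun _ => -M) (y := x)
    (fun j => neg_le_of_abs_le (hx j)) i
  have hhi := mulVec_mono_of_mem_rowStochastic hP (x := x) (y := fun _ => M)
    (fun j => le_of_abs_le (hx j)) i
  rw [mulVec_const_of_mem_rowStochastic hP] at hlo hhi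
  exact abs_le.2 ⟨hlo, hhi⟩

lemma abs_vecMul_le_of_mem_rowStochastic (hP : P ∈ rowStochastic ℝ n) (μ : n → ℝ) (j : n) :
    |(μ ᵥ* P) j| ≤ ∑ i, |μ i| := by
  calc |(μ ᵥ* P) j| ≤ ∑ i, |μ i * P i j| := abs_sum_le_sum_abs _ _
    _ ≤ ∑ i, |μ i| := sum_le_sum fun i _ => by
      rw [abs_mul, abs_of_nonneg (nonneg_of_mem_rowStochastic hP)]
      exact mul_le_of_le_one_right (abs_nonneg _) (le_one_of_mem_rowStochastic hP)

end RowStochastic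

noncomputable def discountedValue {n : Type*} [Fintype n] [DecidableEq n]
    (γ : ℝ) (P : Matrix n n ℝ) (c : n → ℝ) (i : n) : ℝ :=
  ∑' t : ℕ, γ ^ t * (P ^ t *ᵥ c) i

noncomputable def discountedOccupancy {n : Type*} [Fintype n] [DecidableEq n]
    (γ : ℝ) (P : Matrix n n ℝ) (μ : n → ℝ) (j : n) : ℝ :=
  (1 - γ) * ∑' t : ℕ, γ ^ t * (μ ᵥ* P ^ t) j

section Discounted

variable {n : Type*} [Fintype n] [DecidableEq n] {P : Matrix n n ℝ} {γ : ℝ}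

lemma hasSum_discountedValue (hP : P ∈ rowStochastic ℝ n) (hγ0 : 0 ≤ γ) (hγ1 : γ < 1)
    (c : n → ℝ) (i : n) :
    HasSum (fun t : ℕ => γ ^ t * (P ^ t *ᵥ c) i) (discountedValue γ P c i) := by
  refine Summable.hasSum (Summable.of_norm_bounded
    ((summable_geometric_of_lt_one hγ0 hγ1).mul_right ‖c‖) fun t => ?_)
  rw [norm_mul, norm_pow, Real.norm_of_nonneg hγ0, Real.norm_eq_abs]
  exact mul_le_mul_of_nonneg_left (abs_mulVec_le_of_mem_rowStochastic
    (pow_mem hP t) (fun j => norm_le_pi_norm c j) i) (pow_nonneg hγ0 t)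

lemma summable_discountedOccupancy (hP : P ∈ rowStochastic ℝ n) (hγ0 : 0 ≤ γ) (hγ1 : γ < 1)
    (μ : n → ℝ) (j : n) : Summable fun t : ℕ => γ ^ t * (μ ᵥ* P ^ t) j := by
  refine Summable.of_norm_bounded
    ((summable_geometric_of_lt_one hγ0 hγ1).mul_right (∑ i, |μ i|)) fun t => ?_
  rw [norm_mul, norm_pow, Real.norm_of_nonneg hγ0, Real.norm_eq_abs]
  exact mul_le_mul_of_nonneg_left (abs_vecMul_le_of_mem_rowStochastic (pow_mem hP t) μ j)
    (pow_nonneg hγ0 t)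

lemma discountedValue_mono (hP : P ∈ rowStochastic ℝ n) (hγ0 : 0 ≤ γ) (hγ1 : γ < 1)
    {c h : n → ℝ} (hch : c ≤ h) : discountedValue γ P c ≤ discountedValue γ P h := fun i =>
  hasSum_le (fun t => mul_le_mul_of_nonneg_left
      (mulVec_mono_of_mem_rowStochastic (pow_mem hP t) hch i) (pow_nonneg hγ0 t))
    (hasSum_discountedValue hP hγ0 hγ1 c i) (hasSum_discountedValue hP hγ0 hγ1 h i)

lemma discountedValue_const (hP : P ∈ rowStochastic ℝ n) (hγ0 : 0 ≤ γ) (hγ1 : γ < 1)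
    (a : ℝ) (i : n) : discountedValue γ P (fun _ => a) i = a / (1 - γ) := by
  simp only [discountedValue, mulVec_const_of_mem_rowStochastic (pow_mem hP _)]
  rw [tsum_mul_right, tsum_geometric_of_lt_one hγ0 hγ1, div_eq_inv_mul]

lemma discountedValue_bellman (hP : P ∈ rowStochastic ℝ n) (hγ0 : 0 ≤ γ) (hγ1 : γ < 1)
    (c : n → ℝ) (i : n) :
    discountedValue γ P c i = c i + γ * (P *ᵥ discountedValue γ P c) i := by
  have hshift : HasSum (fun t : ℕ => γ ^ (t + 1) * (P ^ (t + 1) *ᵥ c) i)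
      (γ * (P *ᵥ discountedValue γ P c) i) := by
    have hrow : ∀ x : n → ℝ, (P *ᵥ x) i = ∑ j, P i j * x j := fun _ => rfl
    have hterm : (fun t : ℕ => γ ^ (t + 1) * (P ^ (t + 1) *ᵥ c) i) =
        fun t => ∑ j, γ * P i j * (γ ^ t * (P ^ t *ᵥ c) j) := funext fun t => by
      rw [pow_succ' P t, ← mulVec_mulVec, hrow, mul_sum]
      exact sum_congr rfl fun j _ => by ring
    have hval : γ * (P *ᵥ discountedValue γ P c) i =
        ∑ j, γ * P i j * discountedValue γ P c j := by
      rw [hrow, mul_sum]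
      exact sum_congr rfl fun j _ => (mul_assoc _ _ _).symm
    rw [hterm, hval]
    exact hasSum_sum fun j _ =>
      (hasSum_discountedValue hP hγ0 hγ1 c j).mul_left (γ * P i j)
  have h := HasSum.zero_add (f := fun t : ℕ => γ ^ t * (P ^ t *ᵥ c) i) hshift
  rw [pow_zero, pow_zero, one_mul, one_mulVec] at h
  exact (hasSum_discountedValue hP hγ0 hγ1 c i).unique h

lemma le_discountedValue_of_le_bellman (hP : P ∈ rowStochastic ℝ n) (hγ0 : 0 ≤ γ)
    (hγ1 : γ < 1) {f h : n → ℝ} (hf : ∀ i, f i ≤ h i + γ * (P *ᵥ f) i) (i : n) :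
    f i ≤ discountedValue γ P h i := by
  have iterate : ∀ m : ℕ, f i ≤
      ∑ t ∈ range m, γ ^ t * (P ^ t *ᵥ h) i + γ ^ m * (P ^ m *ᵥ f) i := by
    intro m
    induction m with
    | zero => simp
    | succ m ih =>
      have hstep : (P ^ m *ᵥ f) i ≤ (P ^ m *ᵥ h) i + γ * (P ^ (m + 1) *ᵥ f) i := by
        have := mulVec_mono_of_mem_rowStochastic (pow_mem hP m)
          (show f ≤ h + γ • (P *ᵥ f) from hf) i
        simpa [mulVec_add, mulVec_smul, mulVec_mulVec, ← pow_succ] using this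
      rw [sum_range_succ, pow_succ]
      nlinarith [pow_nonneg hγ0 m]
  have hrem : Filter.Tendsto (fun m : ℕ => γ ^ m * (P ^ m *ᵥ f) i) Filter.atTop (nhds 0) := by
    refine squeeze_zero_norm (fun m => ?_)
      (by simpa using (tendsto_pow_atTop_nhds_zero_of_lt_one hγ0 hγ1).mul_const ‖f‖)
    rw [norm_mul, norm_pow, Real.norm_of_nonneg hγ0, Real.norm_eq_abs]
    exact mul_le_mul_of_nonneg_left (abs_mulVec_le_of_mem_rowStochastic
      (pow_mem hP m) (fun j => norm_le_pi_norm f j) i) (pow_nonneg hγ0 m)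
  have hlim := (hasSum_discountedValue hP hγ0 hγ1 h i).tendsto_sum_nat.add hrem
  rw [add_zero] at hlim
  exact ge_of_tendsto' hlim iterate

lemma discountedOccupancy_dotProduct (hP : P ∈ rowStochastic ℝ n) (hγ0 : 0 ≤ γ)
    (hγ1 : γ < 1) (μ c : n → ℝ) :
    discountedOccupancy γ P μ ⬝ᵥ c = (1 - γ) * (μ ⬝ᵥ discountedValue γ P c) := by
  have hμ := hasSum_sum fun i (_ : i ∈ univ) =>
    (hasSum_discountedValue hP hγ0 hγ1 c i).mul_left (μ i)
  have hocc := hasSum_sum fun j (_ : j ∈ univ) =>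
    ((summable_discountedOccupancy hP hγ0 hγ1 μ j).hasSum).mul_right (c j)
  have key : (fun t : ℕ => ∑ j, γ ^ t * (μ ᵥ* P ^ t) j * c j) =
      fun t => ∑ i, μ i * (γ ^ t * (P ^ t *ᵥ c) i) := by
    ext t
    have := dotProduct_mulVec μ (P ^ t) c
    simp only [dotProduct] at this
    simp only [mul_assoc, ← mul_sum, mul_left_comm _ (γ ^ t), this]
  rw [key] at hocc
  simp only [discountedOccupancy, dotProduct, mul_assoc, ← mul_sum, hocc.unique hμ]

lemma discountedValue_nonneg (hP : P ∈ rowStochastic ℝ n) (hγ0 : 0 ≤ γ) (hγ1 : γ < 1)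
    {c : n → ℝ} (hc : 0 ≤ c) : 0 ≤ discountedValue γ P c := fun i => by
  simpa [discountedValue_const hP hγ0 hγ1] using
    discountedValue_mono hP hγ0 hγ1 (c := fun _ => 0) hc i

lemma discountedValue_le (hP : P ∈ rowStochastic ℝ n) (hγ0 : 0 ≤ γ) (hγ1 : γ < 1)
    {c : n → ℝ} {a : ℝ} (hc : ∀ j, c j ≤ a) (i : n) :
    discountedValue γ P c i ≤ a / (1 - γ) := by
  simpa [discountedValue_const hP hγ0 hγ1] using
    discountedValue_mono hP hγ0 hγ1 (h := fun _ => a) hc i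

lemma discountedOccupancy_nonneg (hP : P ∈ rowStochastic ℝ n) (hγ0 : 0 ≤ γ) (hγ1 : γ < 1)
    {μ : n → ℝ} (hμ : 0 ≤ μ) : 0 ≤ discountedOccupancy γ P μ := fun j =>
  mul_nonneg (sub_nonneg.2 hγ1.le) (tsum_nonneg fun t => mul_nonneg (pow_nonneg hγ0 t)
    (nonneg_vecMul_of_mem_rowStochastic (pow_mem hP t) hμ j))

lemma sum_discountedOccupancy (hP : P ∈ rowStochastic ℝ n) (hγ0 : 0 ≤ γ) (hγ1 : γ < 1)
    (μ : n → ℝ) : ∑ j, discountedOccupancy γ P μ j = ∑ i, μ i := by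
  have h := discountedOccupancy_dotProduct hP hγ0 hγ1 μ fun _ => 1
  simp only [dotProduct, mul_one, discountedValue_const hP hγ0 hγ1] at h
  rw [h, ← sum_mul]
  field_simp [sub_ne_zero.2 hγ1.ne']

lemma mul_discountedValue_le (hP : P ∈ rowStochastic ℝ n) (hγ0 : 0 ≤ γ) (hγ1 : γ < 1)
    {μ c : n → ℝ} (hμ : 0 ≤ μ) (hc : 0 ≤ c) (i : n) :
    μ i * discountedValue γ P c i ≤ (1 - γ)⁻¹ * (discountedOccupancy γ P μ ⬝ᵥ c) := by
  rw [discountedOccupancy_dotProduct hP hγ0 hγ1, inv_mul_cancel_left₀ (sub_ne_zero.2 hγ1.ne')]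
  exact single_le_sum (f := fun j => μ j * discountedValue γ P c j)
    (fun j _ => mul_nonneg (hμ j) (discountedValue_nonneg hP hγ0 hγ1 hc j)) (mem_univ i)

end Discounted

section MDP

variable {S A : Type*} [Fintype S] [DecidableEq S] {T : S → A → S → ℝ} {γ : ℝ}

lemma polMatrix_mem_rowStochastic (hT0 : ∀ s a s', 0 ≤ T s a s')
    (hT1 : ∀ s a, ∑ s', T s a s' = 1) (π : S → A) : polMatrix T π ∈ rowStochastic ℝ S :=
  mem_rowStochastic_iff_sum.2 ⟨fun s s' => hT0 s (π s) s', fun s => hT1 s (π s)⟩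

lemma valueFn_eq_discountedValue (r : S → A → ℝ) (π : S → A) :
    valueFn T r γ π = discountedValue γ (polMatrix T π) fun s => r s (π s) := rfl

lemma dvisit_eq_discountedOccupancy (d0 : S → ℝ) (π : S → A) :
    dvisit T d0 γ π = discountedOccupancy γ (polMatrix T π) d0 := rfl

lemma valueFn_sub_le_discountedValue (hT0 : ∀ s a s', 0 ≤ T s a s')
    (hT1 : ∀ s a, ∑ s', T s a s' = 1) (hγ0 : 0 ≤ γ) (hγ1 : γ < 1) {r : S → A → ℝ}
    (hr0 : ∀ s a, 0 ≤ r s a) (hr1 : ∀ s a, r s a ≤ 1) {πE π : S → A} {B : Finset S}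
    (hB : ∀ s' ∉ B, π s' = πE s') (s : S) :
    valueFn T r γ πE s - valueFn T r γ π s ≤
      discountedValue γ (polMatrix T πE) (fun s' => if s' ∈ B then (1 - γ)⁻¹ else 0) s := by
  have hPE := polMatrix_mem_rowStochastic hT0 hT1 πE
  have hP := polMatrix_mem_rowStochastic hT0 hT1 π
  have hV0 : ∀ s', 0 ≤ valueFn T r γ π s' :=
    discountedValue_nonneg hP hγ0 hγ1 fun s' => hr0 s' (π s')
  have hPV : ∀ s', (polMatrix T πE *ᵥ valueFn T r γ π) s' ≤ 1 / (1 - γ) := fun s' => by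
    have h := mulVec_mono_of_mem_rowStochastic hPE (y := fun _ => 1 / (1 - γ))
      (discountedValue_le hP hγ0 hγ1 fun s' => hr1 s' (π s')) s'
    rwa [mulVec_const_of_mem_rowStochastic hPE] at h
  refine le_discountedValue_of_le_bellman hPE hγ0 hγ1
    (f := valueFn T r γ πE - valueFn T r γ π) (fun s' => ?_) s
  have hE := discountedValue_bellman hPE hγ0 hγ1 (fun s => r s (πE s)) s'
  have hπ := discountedValue_bellman hP hγ0 hγ1 (fun s => r s (π s)) s'
  rw [← valueFn_eq_discountedValue] at hE hπ
  rw [mulVec_sub, Pi.sub_apply, Pi.sub_apply]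
  split_ifs with hs'
  · have hγ : 1 + γ * (1 / (1 - γ)) = (1 - γ)⁻¹ := by
      field_simp [sub_ne_zero.2 hγ1.ne']
      ring
    nlinarith [hr1 s' (πE s'), hV0 s', hPV s']
  · have hagree := hB s' hs'
    have hrow : (polMatrix T πE *ᵥ valueFn T r γ π) s' =
        (polMatrix T π *ᵥ valueFn T r γ π) s' := by
      simp [mulVec, dotProduct, polMatrix, hagree]
    rw [hagree] at hπ
    rw [hrow]
    linarith

lemma valueFn_sub_le_sum_dvisit (hT0 : ∀ s a s', 0 ≤ T s a s')
    (hT1 : ∀ s a, ∑ s', T s a s' = 1) (hγ0 : 0 ≤ γ) (hγ1 : γ < 1) {r : S → A → ℝ}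
    (hr0 : ∀ s a, 0 ≤ r s a) (hr1 : ∀ s a, r s a ≤ 1) {d0 : S → ℝ} (hd0 : 0 ≤ d0)
    {πE π : S → A} {B : Finset S} (hB : ∀ s' ∉ B, π s' = πE s') {s : S} (hs : 0 < d0 s) :
    valueFn T r γ πE s - valueFn T r γ π s ≤
      1 / (d0 s * (1 - γ) ^ 2) * ∑ s' ∈ B, dvisit T d0 γ πE s' := by
  have hPE := polMatrix_mem_rowStochastic hT0 hT1 πE
  have hγ : 0 < 1 - γ := sub_pos.2 hγ1
  set h : S → ℝ := fun s' => if s' ∈ B then (1 - γ)⁻¹ else 0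
  have hh : 0 ≤ h := fun s' => by
    simp only [h]
    split_ifs <;> positivity
  have hocc := mul_discountedValue_le hPE hγ0 hγ1 hd0 hh s
  have hdot : discountedOccupancy γ (polMatrix T πE) d0 ⬝ᵥ h =
      (1 - γ)⁻¹ * ∑ s' ∈ B, dvisit T d0 γ πE s' := by
    simp [h, dotProduct, sum_mul, mul_comm, dvisit_eq_discountedOccupancy]
  rw [hdot] at hocc
  calc valueFn T r γ πE s - valueFn T r γ π s ≤ discountedValue γ (polMatrix T πE) h s :=
        valueFn_sub_le_discountedValue hT0 hT1 hγ0 hγ1 hr0 hr1 hB s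
    _ = d0 s * discountedValue γ (polMatrix T πE) h s / d0 s := by field_simp
    _ ≤ (1 - γ)⁻¹ * ((1 - γ)⁻¹ * ∑ s' ∈ B, dvisit T d0 γ πE s') / d0 s := by gcongr
    _ = _ := by field_simp

end MDP

lemma sum_prod_mul_sum_unseen {S : Type*} [Fintype S] [DecidableEq S] {d : S → ℝ}
    (hd : ∑ x, d x = 1) (N : ℕ) :
    ∑ D : Fin N → S, (∏ i, d (D i)) * ∑ x with ∀ i, D i ≠ x, d x =
      ∑ x, d x * (1 - d x) ^ N := by
  have hfactor : ∀ x, ∑ D : Fin N → S, ∏ i, (if D i ≠ x then d (D i) else 0) =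
      (1 - d x) ^ N := by
    intro x
    rw [← Fintype.sum_pow (fun y => if y ≠ x then d y else 0), ← sum_filter, filter_ne',
      sum_erase_eq_sub (mem_univ x), hd]
  have hterm : ∀ D : Fin N → S, (∏ i, d (D i)) * ∑ x with ∀ i, D i ≠ x, d x =
      ∑ x, d x * ∏ i, (if D i ≠ x then d (D i) else 0) := by
    intro D
    simp only [prod_ite_zero, mem_univ, true_implies, sum_filter, mul_sum]
    exact sum_congr rfl fun x _ => by split_ifs <;> ring
  simp only [hterm]
  rw [sum_comm]
  simp only [← mul_sum, hfactor]

lemma mul_one_sub_pow_le {x : ℝ} (hx0 : 0 ≤ x) (hx1 : x ≤ 1) {N : ℕ} (hN : 0 < N) :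
    x * (1 - x) ^ N ≤ 4 / (9 * N) := by
  have hpow : (1 - x) ^ N ≤ Real.exp (-(N * x)) := by
    calc (1 - x) ^ N ≤ Real.exp (-x) ^ N :=
          pow_le_pow_left₀ (sub_nonneg.2 hx1) (Real.one_sub_le_exp_neg x) N
      _ = Real.exp (-(N * x)) := by rw [← Real.exp_nat_mul]; ring_nf
  have hexp := Real.mul_exp_neg_le_exp_neg_one (N * x)
  have he : Real.exp (-1) < 4 / 9 := Real.exp_neg_one_lt_d9.trans (by norm_num)
  rw [le_div_iff₀ (by positivity)]
  calc x * (1 - x) ^ N * (9 * N) ≤ x * Real.exp (-(N * x)) * (9 * N) := by gcongr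
    _ = 9 * (N * x * Real.exp (-(N * x))) := by ring
    _ ≤ 4 := by linarith

theorem stmt_2_general {S A : Type*} [Fintype S] [DecidableEq S]
    (T : S → A → S → ℝ) (hT0 : ∀ s a s', 0 ≤ T s a s') (hT1 : ∀ s a, ∑ s', T s a s' = 1)
    (r : S → A → ℝ) (hr0 : ∀ s a, 0 ≤ r s a) (hr1 : ∀ s a, r s a ≤ 1)
    (d0 : S → ℝ) (hd00 : ∀ s, 0 ≤ d0 s) (hd01 : ∑ s, d0 s = 1)
    (γ : ℝ) (hγ0 : 0 < γ) (hγ1 : γ < 1)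
    (πE : S → A) (N : ℕ) (hN : 1 ≤ N)
    (πD : (Fin N → S) → S → A)
    (hπD : ∀ D : Fin N → S, ∀ i : Fin N, πD D (D i) = πE (D i))
    (s : S) (hs : 0 < d0 s) :
    (∑ D : Fin N → S,
        (∏ i, dvisit T d0 γ πE (D i)) * (valueFn T r γ πE s - valueFn T r γ (πD D) s))
      ≤ 1 / (d0 s * (1 - γ) ^ 2) * (4 * (Fintype.card S : ℝ) / (9 * (N : ℝ))) := by
  have hPE := polMatrix_mem_rowStochastic hT0 hT1 πE
  set d := dvisit T d0 γ πE
  set K := 1 / (d0 s * (1 - γ) ^ 2)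
  have hd0 : ∀ x, 0 ≤ d x := discountedOccupancy_nonneg hPE hγ0.le hγ1 hd00
  have hd1 : ∑ x, d x = 1 := (sum_discountedOccupancy hPE hγ0.le hγ1 d0).trans hd01
  have hgap : ∀ D : Fin N → S, valueFn T r γ πE s - valueFn T r γ (πD D) s ≤
      K * ∑ x with ∀ i, D i ≠ x, d x := fun D =>
    valueFn_sub_le_sum_dvisit hT0 hT1 hγ0.le hγ1 hr0 hr1 hd00 (fun x hx => by
      obtain ⟨i, rfl⟩ : ∃ i, D i = x := by simpa using hx
      exact hπD D i) hs
  calc _ ≤ ∑ D : Fin N → S, (∏ i, d (D i)) * (K * ∑ x with ∀ i, D i ≠ x, d x) :=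
        sum_le_sum fun D _ => mul_le_mul_of_nonneg_left (hgap D) (prod_nonneg fun i _ => hd0 _)
    _ = K * ∑ x, d x * (1 - d x) ^ N := by
        rw [← sum_prod_mul_sum_unseen hd1, mul_sum]
        exact sum_congr rfl fun D _ => by ring
    _ ≤ K * ∑ _x : S, 4 / (9 * (N : ℝ)) := by
        gcongr with x
        have hx1 : d x ≤ 1 := hd1 ▸ single_le_sum (fun y _ => hd0 y) (mem_univ x)
        exact mul_one_sub_pow_le (hd0 x) hx1 hN
    _ = K * (4 * (Fintype.card S : ℝ) / (9 * (N : ℝ))) := by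
        rw [sum_const, card_univ, nsmul_eq_mul]
        ring

/-- Let `D = (st₁,…,st_N)` consist of `N ≥ 1` i.i.d. draws from the
normalized discounted visitation distribution `d^{π^E}` of the deterministic expert
policy `π^E`.  Suppose for every dataset `D` a deterministic policy `π_D` is given with
`π_D(st) = π^E(st)` for all states `st` appearing in `D`.  Then for every state `s` with
`d₀(s) > 0`, the expected value gap satisfies
`E_D[V^{π^E}(s) − V^{π_D}(s)] ≤ (1/(d₀(s)(1−γ)²)) · (4|S|/(9N))`. -/
theorem stmt_2 {S A : Type*} [Fintype S] [Fintype A] [DecidableEq S]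
    (T : S → A → S → ℝ) (hT0 : ∀ s a s', 0 ≤ T s a s') (hT1 : ∀ s a, ∑ s', T s a s' = 1)
    (r : S → A → ℝ) (hr0 : ∀ s a, 0 ≤ r s a) (hr1 : ∀ s a, r s a ≤ 1)
    (d0 : S → ℝ) (hd00 : ∀ s, 0 ≤ d0 s) (hd01 : ∑ s, d0 s = 1)
    (γ : ℝ) (hγ0 : 0 < γ) (hγ1 : γ < 1)
    (πE : S → A) (N : ℕ) (hN : 1 ≤ N)
    (πD : (Fin N → S) → S → A)
    (hπD : ∀ D : Fin N → S, ∀ i : Fin N, πD D (D i) = πE (D i))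
    (s : S) (hs : 0 < d0 s) :
    (∑ D : Fin N → S,
        (∏ i, dvisit T d0 γ πE (D i)) * (valueFn T r γ πE s - valueFn T r γ (πD D) s))
      ≤ 1 / (d0 s * (1 - γ) ^ 2) * (4 * (Fintype.card S : ℝ) / (9 * (N : ℝ))) :=
  stmt_2_general T hT0 hT1 r hr0 hr1 d0 hd00 hd01 γ hγ0 hγ1 πE N hN πD hπD s hs
end

section
/- Let S be a finite set and let d be a probability distribution on S (d(s) ≥ 0 and Σ_{s∈S} d(s) = 1). Then for every integer N ≥ 1, Σ_{s∈S} d(s)(1 − d(s))^N ≤ 4|S|/(9N). -/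
open scoped BigOperators

lemma aux_pointwise (x : ℝ) (hx0 : 0 ≤ x) (hx1 : x ≤ 1) (N : ℕ) (hN : 1 ≤ N) :
    x * (1 - x) ^ N ≤ 4 / (9 * (N : ℝ)) := by
  have hNpos : (0:ℝ) < N := by exact_mod_cast hN
  have h1 : (1 - x) ^ N ≤ Real.exp (-x) ^ N := by
    apply pow_le_pow_left₀ (by linarith)
    linarith [Real.add_one_le_exp (-x)]
  have h2 : x * (1 - x) ^ N ≤ x * Real.exp (-(N * x)) := by
    have : Real.exp (-x) ^ N = Real.exp (-(N * x)) := by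
      rw [← Real.exp_nat_mul]; ring_nf
    rw [← this]
    exact mul_le_mul_of_nonneg_left h1 hx0
  have h3 : (N : ℝ) * x * Real.exp (-(N * x)) ≤ Real.exp (-1) := by
    set t : ℝ := N * x with ht
    have ht0 : 0 ≤ t := mul_nonneg hNpos.le hx0
    have key : t ≤ Real.exp (t - 1) := by
      linarith [Real.add_one_le_exp (t - 1)]
    calc t * Real.exp (-t) ≤ Real.exp (t - 1) * Real.exp (-t) := by
          exact mul_le_mul_of_nonneg_right key (Real.exp_pos _).le
      _ = Real.exp (-1) := by rw [← Real.exp_add]; ring_nf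
  have hexp : Real.exp (-1) ≤ 4 / 9 := by
    rw [Real.exp_neg]
    rw [inv_le_iff_one_le_mul₀' (Real.exp_pos 1)]
    nlinarith [Real.exp_one_gt_d9]
  have : x * Real.exp (-(N * x)) ≤ 4 / (9 * (N : ℝ)) := by
    rw [div_mul_eq_div_div, le_div_iff₀ hNpos]
    calc x * Real.exp (-(N * x)) * N = N * x * Real.exp (-(N * x)) := by ring
      _ ≤ Real.exp (-1) := h3
      _ ≤ 4 / 9 := hexp
  linarith

/-- If `d` is a probability distribution on a finite set `S`, then for every
integer `N ≥ 1`, `Σ_{s∈S} d(s)(1 - d(s))^N ≤ 4|S|/(9N)`. -/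
theorem stmt_5 {S : Type*} [Fintype S] (d : S → ℝ)
    (hd0 : ∀ s, 0 ≤ d s) (hd1 : ∑ s, d s = 1) (N : ℕ) (hN : 1 ≤ N) :
    ∑ s, d s * (1 - d s) ^ N ≤ 4 * (Fintype.card S : ℝ) / (9 * (N : ℝ)) := by
  have hle : ∀ s : S, d s ≤ 1 := by
    intro s
    rw [← hd1]
    exact Finset.single_le_sum (fun i _ => hd0 i) (Finset.mem_univ s)
  calc ∑ s, d s * (1 - d s) ^ N ≤ ∑ _s : S, 4 / (9 * (N : ℝ)) :=
        Finset.sum_le_sum fun s _ => aux_pointwise (d s) (hd0 s) (hle s) N hN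
    _ = (Fintype.card S : ℝ) * (4 / (9 * (N : ℝ))) := by
        rw [Finset.sum_const, Finset.card_univ, nsmul_eq_mul]
    _ = 4 * (Fintype.card S : ℝ) / (9 * (N : ℝ)) := by ring
end

section
/- Let S be a finite set, let d be a probability distribution on S, and let N ≥ 1. If D = (X₁, …, X_N) are N independent draws from d, then the expected d-mass of the states not appearing in D equals Σ_{s∈S} d(s)(1 − d(s))^N, and hence is at most 4|S|/(9N). -/
open scoped BigOperators

lemma aux_sum_pow {S : Type*} [Fintype S] (f : S → ℝ) (N : ℕ) :
    ∑ X : Fin N → S, ∏ i, f (X i) = (∑ x, f x) ^ N := by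
  rw [Finset.sum_pow' Finset.univ f N]
  rw [Fintype.piFinset_univ]

lemma aux_bound {p : ℝ} (hp0 : 0 ≤ p) (hp1 : p ≤ 1) {N : ℕ} (hN : 1 ≤ N) :
    p * (1 - p) ^ N ≤ 4 / (9 * N) := by
  have hNpos : (0 : ℝ) < N := by exact_mod_cast hN
  have h1 : (1 - p) ^ N ≤ Real.exp (-p) ^ N := by
    apply pow_le_pow_left₀ (by linarith)
    linarith [Real.add_one_le_exp (-p)]
  have h2 : p * (1 - p) ^ N ≤ p * Real.exp (-(p * N)) := by
    have := mul_le_mul_of_nonneg_left h1 hp0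
    rwa [← Real.exp_nat_mul, mul_comm (N : ℝ) (-p), neg_mul] at this
  have h3 : p * N * Real.exp (-(p * N)) ≤ Real.exp (-1) := by
    have ht : 0 ≤ p * N := mul_nonneg hp0 hNpos.le
    have hexp : p * N ≤ Real.exp (p * N) * Real.exp (-1) := by
      rw [← Real.exp_add]
      have := Real.add_one_le_exp (p * N + -1)
      linarith
    have hpos : (0 : ℝ) < Real.exp (-(p * N)) := Real.exp_pos _
    calc p * N * Real.exp (-(p * N))
        ≤ Real.exp (p * N) * Real.exp (-1) * Real.exp (-(p * N)) := by
          apply mul_le_mul_of_nonneg_right hexp hpos.le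
      _ = Real.exp (-1) := by
          rw [mul_comm (Real.exp (p * N)) (Real.exp (-1)), mul_assoc, ← Real.exp_add]
          simp
  have h4 : Real.exp (-1) ≤ 4 / 9 := by
    rw [Real.exp_neg]
    have hpos := Real.exp_pos 1
    have hinv := mul_inv_cancel₀ (ne_of_gt hpos)
    nlinarith [Real.exp_one_gt_d9, inv_nonneg.mpr hpos.le]
  have h5 : p * Real.exp (-(p * N)) ≤ 4 / (9 * N) := by
    rw [le_div_iff₀ (by positivity)]
    calc p * Real.exp (-(p * N)) * (9 * N) = 9 * (p * N * Real.exp (-(p * N))) := by ring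
      _ ≤ 9 * Real.exp (-1) := by linarith
      _ ≤ 4 := by linarith
  linarith

/-- If `D = (X₁,…,X_N)` are `N ≥ 1` i.i.d. draws from a probability
distribution `d` on a finite set `S`, then the expected `d`-mass of the states not
appearing in `D` equals `Σ_{s∈S} d(s)(1-d(s))^N`, and hence is at most `4|S|/(9N)`. -/
theorem stmt_12 {S : Type*} [Fintype S] [DecidableEq S]
    (d : S → ℝ) (hd0 : ∀ s, 0 ≤ d s) (hd1 : ∑ s, d s = 1)
    (N : ℕ) (hN : 1 ≤ N) :
    (∑ X : Fin N → S, (∏ i, d (X i)) * ∑ s, (if ∃ i, X i = s then 0 else d s))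
        = ∑ s, d s * (1 - d s) ^ N ∧
      (∑ X : Fin N → S, (∏ i, d (X i)) * ∑ s, (if ∃ i, X i = s then 0 else d s))
        ≤ 4 * (Fintype.card S : ℝ) / (9 * (N : ℝ)) := by
  have hd1' : ∀ s, d s ≤ 1 := by
    intro s
    calc d s ≤ ∑ x, d x := Finset.single_le_sum (fun x _ => hd0 x) (Finset.mem_univ s)
      _ = 1 := hd1
  have key : (∑ X : Fin N → S, (∏ i, d (X i)) * ∑ s, (if ∃ i, X i = s then 0 else d s))
      = ∑ s, d s * (1 - d s) ^ N := by
    have step1 : ∀ (X : Fin N → S) (s : S),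
        (∏ i, d (X i)) * (if ∃ i, X i = s then 0 else d s)
          = d s * ∏ i, (if X i = s then 0 else d (X i)) := by
      intro X s
      by_cases h : ∃ i, X i = s
      · obtain ⟨i, hi⟩ := h
        have hz : (∏ j, (if X j = s then (0:ℝ) else d (X j))) = 0 :=
          Finset.prod_eq_zero (Finset.mem_univ i)
            (show (if X i = s then (0:ℝ) else d (X i)) = 0 by simp [hi])
        rw [if_pos ⟨i, hi⟩, hz]
        ring
      · rw [if_neg h]
        have : ∀ i, (if X i = s then 0 else d (X i)) = d (X i) := by
          intro i
          rw [if_neg (fun hc => h ⟨i, hc⟩)]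
        rw [Finset.prod_congr rfl (fun i _ => this i)]
        ring
    calc (∑ X : Fin N → S, (∏ i, d (X i)) * ∑ s, (if ∃ i, X i = s then 0 else d s))
        = ∑ X : Fin N → S, ∑ s, (∏ i, d (X i)) * (if ∃ i, X i = s then 0 else d s) := by
          apply Finset.sum_congr rfl; intro X _; rw [Finset.mul_sum]
      _ = ∑ s, ∑ X : Fin N → S, (∏ i, d (X i)) * (if ∃ i, X i = s then 0 else d s) :=
          Finset.sum_comm
      _ = ∑ s, ∑ X : Fin N → S, d s * ∏ i, (if X i = s then 0 else d (X i)) := by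
          apply Finset.sum_congr rfl; intro s _
          apply Finset.sum_congr rfl; intro X _
          exact step1 X s
      _ = ∑ s, d s * ∑ X : Fin N → S, ∏ i, (if X i = s then 0 else d (X i)) := by
          apply Finset.sum_congr rfl; intro s _; rw [Finset.mul_sum]
      _ = ∑ s, d s * (∑ x, if x = s then 0 else d x) ^ N := by
          apply Finset.sum_congr rfl; intro s _
          rw [aux_sum_pow (fun x => if x = s then 0 else d x) N]
      _ = ∑ s, d s * (1 - d s) ^ N := by
          apply Finset.sum_congr rfl; intro s _
          congr 2
          have hx : ∀ x, (if x = s then (0:ℝ) else d x)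
              = d x - (if x = s then d x else 0) := by
            intro x; by_cases hxs : x = s <;> simp [hxs]
          rw [Finset.sum_congr rfl fun x _ => hx x, Finset.sum_sub_distrib,
            Finset.sum_ite_eq' Finset.univ s d, if_pos (Finset.mem_univ s), hd1]
  refine ⟨key, ?_⟩
  rw [key]
  have hNpos : (0 : ℝ) < N := by exact_mod_cast hN
  calc ∑ s, d s * (1 - d s) ^ N ≤ ∑ _s : S, 4 / (9 * (N : ℝ)) := by
        apply Finset.sum_le_sum
        intro s _
        exact aux_bound (hd0 s) (hd1' s) hN
    _ = (Fintype.card S : ℝ) * (4 / (9 * N)) := by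
        rw [Finset.sum_const, Finset.card_univ, nsmul_eq_mul]
    _ = 4 * (Fintype.card S : ℝ) / (9 * (N : ℝ)) := by ring
end

section
/- Let S be a finite set, P a row-stochastic matrix indexed by S, r : S → [0,1] a reward function, γ ∈ (0,1), and E ⊆ S. Define the value V(s) = Σ_{t=0}^∞ γ^t Σ_{s'} (P^t)_{s,s'} r(s'), and for t ≥ 0 define the first-exit-constrained visitation A_t(s) = Pr(s_0,…,s_{t−1} ∈ E and s_t = s | s_0, P), i.e. the sum over all paths from the start state that remain in E at times 0,…,t−1 and are at s at time t. Then for every start state s₀ ∈ E: V(s₀) = Σ_{t=0}^∞ γ^t Σ_{s ∈ E} A_t(s) r(s) + Σ_{t=1}^∞ γ^t Σ_{s ∉ E} A_t(s) V(s). -/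
open scoped BigOperators

/-- `constrainedVisit P E s₀ t s` is the probability, for the Markov chain with transition
matrix `P` started at `s₀`, of staying in `E` at times `0,…,t-1` and being at `s` at time
`t`: for `t ≥ 1` it unfolds to the path sum
`Σ_{(s₁,…,s_{t−1}) ∈ E^{t−1}} P_{s₀,s₁} ⋯ P_{s_{t−1},s}` (with the additional constraint
`s₀ ∈ E` built in), and `constrainedVisit P E s₀ 0 s = 𝟙[s = s₀]`. -/
noncomputable def constrainedVisit {S : Type*} [Fintype S] [DecidableEq S]
    (P : Matrix S S ℝ) (E : Finset S) (s₀ : S) : ℕ → S → ℝ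
  | 0 => fun s => if s = s₀ then 1 else 0
  | (t + 1) => fun s => ∑ s' ∈ E, constrainedVisit P E s₀ t s' * P s' s

/-- The value function of a Markov reward process with transition matrix `P`,
reward `r` and discount factor `γ`. -/
noncomputable def mrpValue {S : Type*} [Fintype S] [DecidableEq S]
    (P : Matrix S S ℝ) (r : S → ℝ) (γ : ℝ) (s : S) : ℝ :=
  ∑' t : ℕ, γ ^ t * ∑ s', (P ^ t) s s' * r s'

/-!
The value function solves the Bellman equation `V = r + γ P V`. Substituting it
into `γ^t Σ_{s∈E} A_t(s) V(s)` and splitting the next state according to whether it lies in `E`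
gives `γ^t Σ_{E} A_t r + γ^{t+1} Σ_{∉E} A_{t+1} V + γ^{t+1} Σ_{E} A_{t+1} V`. Iterating `T`
times from `A_0 = 𝟙_{s₀}` writes `V(s₀)` as the partial sums of both series plus the remainder
`γ^T Σ_{E} A_T V`, which tends to zero because `A_T` is a sub-probability vector and `V` is
bounded on the finite state space.
-/

open Finset Filter Topology Matrix

lemma summable_pow_mul_of_abs_le {γ C : ℝ} (hγ : |γ| < 1) {f : ℕ → ℝ}
    (hf : ∀ t, |f t| ≤ C) : Summable fun t => γ ^ t * f t := by
  refine Summable.of_norm_bounded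
    ((summable_geometric_of_lt_one (abs_nonneg γ) hγ).mul_right C) fun t => ?_
  rw [norm_mul, norm_pow, Real.norm_eq_abs, Real.norm_eq_abs]
  exact mul_le_mul_of_nonneg_left (hf t) (by positivity)

lemma tendsto_pow_mul_of_abs_le {γ C : ℝ} (hγ : |γ| < 1) {f : ℕ → ℝ}
    (hf : ∀ t, |f t| ≤ C) : Tendsto (fun t => γ ^ t * f t) atTop (𝓝 0) :=
  (tendsto_pow_atTop_nhds_zero_of_abs_lt_one hγ).zero_mul_isBoundedUnder_le
    (isBoundedUnder_of ⟨C, hf⟩)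

lemma hasSum_of_eq_sum_range_add {u c : ℕ → ℝ} {x : ℝ} (hu : Summable u)
    (hc : Tendsto c atTop (𝓝 0)) (h : ∀ T, x = ∑ t ∈ range T, u t + c T) : HasSum u x := by
  refine hu.hasSum_iff_tendsto_nat.2 ?_
  have hlim : Tendsto (fun T => x - c T) atTop (𝓝 (x - 0)) := tendsto_const_nhds.sub hc
  rw [sub_zero] at hlim
  exact hlim.congr fun T => by rw [h T, add_sub_cancel_right]

lemma abs_sum_mul_le_norm {S : Type*} [Fintype S] {w : S → ℝ} (hw0 : ∀ s, 0 ≤ w s)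
    (hw1 : ∑ s, w s ≤ 1) (F : Finset S) (f : S → ℝ) : |∑ s ∈ F, w s * f s| ≤ ‖f‖ :=
  calc |∑ s ∈ F, w s * f s|
      ≤ ∑ s ∈ F, w s * ‖f‖ := by
        refine (abs_sum_le_sum_abs _ _).trans (sum_le_sum fun s _ => ?_)
        rw [abs_mul, abs_of_nonneg (hw0 s), ← Real.norm_eq_abs]
        exact mul_le_mul_of_nonneg_left (norm_le_pi_norm f s) (hw0 s)
    _ ≤ ∑ s, w s * ‖f‖ :=
        sum_le_sum_of_subset_of_nonneg (subset_univ F) fun s _ _ =>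
          mul_nonneg (hw0 s) (norm_nonneg f)
    _ = (∑ s, w s) * ‖f‖ := (sum_mul ..).symm
    _ ≤ ‖f‖ := mul_le_of_le_one_left (norm_nonneg f) hw1

section MarkovRewardProcess

variable {S : Type*} [Fintype S] [DecidableEq S] {P : Matrix S S ℝ}

lemma abs_sum_pow_apply_mul_le (hP : P ∈ rowStochastic ℝ S) (t : ℕ) (s : S) (f : S → ℝ) :
    |∑ s', (P ^ t) s s' * f s'| ≤ ‖f‖ :=
  have hPt := pow_mem hP t
  abs_sum_mul_le_norm (fun _ => nonneg_of_mem_rowStochastic hPt)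
    (sum_row_of_mem_rowStochastic hPt s).le univ f

lemma summable_mrpValue (hP : P ∈ rowStochastic ℝ S) (r : S → ℝ) {γ : ℝ} (hγ : |γ| < 1)
    (s : S) : Summable fun t => γ ^ t * ∑ s', (P ^ t) s s' * r s' :=
  summable_pow_mul_of_abs_le hγ fun t => abs_sum_pow_apply_mul_le hP t s r

lemma mrpValue_eq_add_mul_sum (hP : P ∈ rowStochastic ℝ S) (r : S → ℝ) {γ : ℝ}
    (hγ : |γ| < 1) (s : S) :
    mrpValue P r γ s = r s + γ * ∑ s', P s s' * mrpValue P r γ s' := by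
  have hshift : ∀ t : ℕ, γ ^ (t + 1) * ∑ s', (P ^ (t + 1)) s s' * r s'
      = ∑ s'', P s s'' * (γ * (γ ^ t * ∑ s', (P ^ t) s'' s' * r s')) := by
    intro t
    simp only [pow_succ' P t, mul_apply, sum_mul, mul_sum]
    rw [sum_comm]
    exact sum_congr rfl fun _ _ => sum_congr rfl fun _ _ => by ring
  rw [mrpValue, (summable_mrpValue hP r hγ s).tsum_eq_zero_add, tsum_congr hshift,
    Summable.tsum_finsetSum fun s'' _ => ((summable_mrpValue hP r hγ s'').mul_left γ).mul_left _]
  congr 1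
  · simp [one_apply]
  · rw [mul_sum]
    refine sum_congr rfl fun s'' _ => ?_
    rw [tsum_mul_left, tsum_mul_left, mrpValue]
    ring

lemma constrainedVisit_nonneg (hP0 : ∀ s s', 0 ≤ P s s') (E : Finset S) (s₀ : S) :
    ∀ t s, 0 ≤ constrainedVisit P E s₀ t s
  | 0, s => by simp only [constrainedVisit]; split_ifs <;> norm_num
  | t + 1, s => sum_nonneg fun s' _ =>
      mul_nonneg (constrainedVisit_nonneg hP0 E s₀ t s') (hP0 s' s)

lemma sum_constrainedVisit_succ_mul (E : Finset S) (s₀ : S) (t : ℕ) (f : S → ℝ) :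
    ∑ s, constrainedVisit P E s₀ (t + 1) s * f s
      = ∑ s ∈ E, constrainedVisit P E s₀ t s * ∑ s', P s s' * f s' := by
  simp only [constrainedVisit, sum_mul, mul_sum]
  rw [sum_comm]
  exact sum_congr rfl fun _ _ => sum_congr rfl fun _ _ => by ring

lemma sum_constrainedVisit_le_one (hP : P ∈ rowStochastic ℝ S) (E : Finset S) (s₀ : S) :
    ∀ t, ∑ s, constrainedVisit P E s₀ t s ≤ 1
  | 0 => by simp [constrainedVisit]
  | t + 1 => by
    have hstep := sum_constrainedVisit_succ_mul (P := P) E s₀ t fun _ => 1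
    simp only [mul_one, sum_row_of_mem_rowStochastic hP] at hstep
    calc ∑ s, constrainedVisit P E s₀ (t + 1) s
        = ∑ s ∈ E, constrainedVisit P E s₀ t s := hstep
      _ ≤ ∑ s, constrainedVisit P E s₀ t s :=
          sum_le_sum_of_subset_of_nonneg (subset_univ E) fun s _ _ =>
            constrainedVisit_nonneg hP.1 E s₀ t s
      _ ≤ 1 := sum_constrainedVisit_le_one hP E s₀ t

lemma abs_sum_constrainedVisit_mul_le (hP : P ∈ rowStochastic ℝ S) (E : Finset S) (s₀ : S)
    (t : ℕ) (F : Finset S) (f : S → ℝ) : |∑ s ∈ F, constrainedVisit P E s₀ t s * f s| ≤ ‖f‖ :=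
  abs_sum_mul_le_norm (constrainedVisit_nonneg hP.1 E s₀ t)
    (sum_constrainedVisit_le_one hP E s₀ t) F f

lemma sum_constrainedVisit_zero_mul {E : Finset S} {s₀ : S} (hs₀ : s₀ ∈ E) (f : S → ℝ) :
    ∑ s ∈ E, constrainedVisit P E s₀ 0 s * f s = f s₀ := by
  simp [constrainedVisit, hs₀]

end MarkovRewardProcess

section FirstExit

variable {S : Type*} [Fintype S] [DecidableEq S] {P : Matrix S S ℝ} {r V : S → ℝ} {γ : ℝ}

lemma firstExit_step (hV : ∀ s, V s = r s + γ * ∑ s', P s s' * V s') (E : Finset S) (s₀ : S)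
    (t : ℕ) :
    γ ^ t * ∑ s ∈ E, constrainedVisit P E s₀ t s * V s
      = γ ^ t * ∑ s ∈ E, constrainedVisit P E s₀ t s * r s
        + γ ^ (t + 1) * ∑ s ∈ univ \ E, constrainedVisit P E s₀ (t + 1) s * V s
        + γ ^ (t + 1) * ∑ s ∈ E, constrainedVisit P E s₀ (t + 1) s * V s := by
  have hbellman : ∑ s ∈ E, constrainedVisit P E s₀ t s * V s
      = ∑ s ∈ E, constrainedVisit P E s₀ t s * r s
        + γ * ∑ s, constrainedVisit P E s₀ (t + 1) s * V s := by
    rw [sum_constrainedVisit_succ_mul, mul_sum, ← sum_add_distrib]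
    exact sum_congr rfl fun s _ => by rw [hV s]; ring
  rw [hbellman, ← sum_sdiff (subset_univ E)]
  ring

lemma eq_firstExit_sum_range_add (hV : ∀ s, V s = r s + γ * ∑ s', P s s' * V s')
    {E : Finset S} {s₀ : S} (hs₀ : s₀ ∈ E) (T : ℕ) :
    V s₀ = ∑ t ∈ range T,
        (γ ^ t * ∑ s ∈ E, constrainedVisit P E s₀ t s * r s
          + γ ^ (t + 1) * ∑ s ∈ univ \ E, constrainedVisit P E s₀ (t + 1) s * V s)
      + γ ^ T * ∑ s ∈ E, constrainedVisit P E s₀ T s * V s := by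
  induction T with
  | zero => simp [sum_constrainedVisit_zero_mul hs₀]
  | succ T ih => rw [ih, firstExit_step hV, sum_range_succ]; ring

end FirstExit

theorem stmt_14_general {S : Type*} [Fintype S] [DecidableEq S]
    (P : Matrix S S ℝ) (hP0 : ∀ s s', 0 ≤ P s s') (hP1 : ∀ s, ∑ s', P s s' = 1)
    (r : S → ℝ)
    (γ : ℝ) (hγ0 : 0 < γ) (hγ1 : γ < 1)
    (E : Finset S) (s₀ : S) (hs₀ : s₀ ∈ E) :
    mrpValue P r γ s₀ =
      (∑' t : ℕ, γ ^ t * ∑ s ∈ E, constrainedVisit P E s₀ t s * r s)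
        + ∑' t : ℕ, γ ^ (t + 1) *
            ∑ s ∈ Finset.univ \ E, constrainedVisit P E s₀ (t + 1) s * mrpValue P r γ s := by
  have hP : P ∈ rowStochastic ℝ S := mem_rowStochastic_iff_sum.2 ⟨hP0, hP1⟩
  have hγ : |γ| < 1 := abs_lt.2 ⟨by linarith, hγ1⟩
  have hbound := abs_sum_constrainedVisit_mul_le hP E s₀
  have hinside := summable_pow_mul_of_abs_le hγ fun t => hbound t E r
  have hexit := (summable_nat_add_iff 1).2 <|
    summable_pow_mul_of_abs_le hγ fun t => hbound t (univ \ E) (mrpValue P r γ)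
  have hremainder := tendsto_pow_mul_of_abs_le hγ fun t => hbound t E (mrpValue P r γ)
  rw [← hinside.tsum_add hexit]
  exact (hasSum_of_eq_sum_range_add (hinside.add hexit) hremainder
    (eq_firstExit_sum_range_add (mrpValue_eq_add_mul_sum hP r hγ) hs₀)).tsum_eq.symm

/-- First-exit decomposition of the value function: for every start state
`s₀ ∈ E`,
`V(s₀) = Σ_{t=0}^∞ γ^t Σ_{s∈E} A_t(s) r(s) + Σ_{t=1}^∞ γ^t Σ_{s∉E} A_t(s) V(s)`,
where `A_t` is the first-exit-constrained visitation `constrainedVisit P E s₀ t`. -/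
theorem stmt_14 {S : Type*} [Fintype S] [DecidableEq S]
    (P : Matrix S S ℝ) (hP0 : ∀ s s', 0 ≤ P s s') (hP1 : ∀ s, ∑ s', P s s' = 1)
    (r : S → ℝ) (hr0 : ∀ s, 0 ≤ r s) (hr1 : ∀ s, r s ≤ 1)
    (γ : ℝ) (hγ0 : 0 < γ) (hγ1 : γ < 1)
    (E : Finset S) (s₀ : S) (hs₀ : s₀ ∈ E) :
    mrpValue P r γ s₀ =
      (∑' t : ℕ, γ ^ t * ∑ s ∈ E, constrainedVisit P E s₀ t s * r s)
        + ∑' t : ℕ, γ ^ (t + 1) *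
            ∑ s ∈ Finset.univ \ E, constrainedVisit P E s₀ (t + 1) s * mrpValue P r γ s :=
  stmt_14_general P hP0 hP1 r γ hγ0 hγ1 E s₀ hs₀
end
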